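/- Fix an outcome ô ∈ {Reject, Accept}^N. Let D ⊆ C_ô, let F ⊆ ℝ^N be a set with F ∩ C = p_ô + D, and set G = p_ô + R(D). Then ∂F ∩ int(C) = ∂G ∩ int(C). -/

import Mathlib

open MeasureTheory
open scoped ENNReal

/-- Possible outcomes of a test on a single coin. -/
inductive Outcome : Type
  | Reject : Outcome
  | Accept : Outcome
deriving DecidableEq

/-- The cube `C = [p₀, q₀]^N ⊆ ℝ^N`. -/
def cube (N : ℕ) (p₀ q₀ : ℝ) : Set (EuclideanSpace ℝ (Fin N)) :=
  {x | ∀ i, x i ∈ Set.Icc p₀ q₀}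

/-- The corner `p_ô` of the cube `[p₀, q₀]^N` associated with the outcome vector `ô`:
`(p_ô)ᵢ = p₀` if `ôᵢ = Reject` and `(p_ô)ᵢ = q₀` if `ôᵢ = Accept`. -/
noncomputable def corner {N : ℕ} (p₀ q₀ : ℝ) (o : Fin N → Outcome) :
    EuclideanSpace ℝ (Fin N) :=
  WithLp.toLp 2 (fun i => if o i = Outcome.Accept then q₀ else p₀)

/-- The box `C_ô = ∏ᵢ Jᵢ` with `Jᵢ = [0, ε]` if `ôᵢ = Reject` and `Jᵢ = [−ε, 0]` if
`ôᵢ = Accept`, where `ε = q₀ − p₀`; it satisfies `C = p_ô + C_ô`. -/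
def cornerBox {N : ℕ} (p₀ q₀ : ℝ) (o : Fin N → Outcome) :
    Set (EuclideanSpace ℝ (Fin N)) :=
  {x | ∀ i, if o i = Outcome.Accept then x i ∈ Set.Icc (-(q₀ - p₀)) 0
    else x i ∈ Set.Icc 0 (q₀ - p₀)}

/-- `Y_ô`: a point `p` of `∂C` *agrees* with the outcome `ô` if there is no coordinate `i` with
(`pᵢ = p₀` and `ôᵢ = Accept`) or (`pᵢ = q₀` and `ôᵢ = Reject`). -/
def agreeSet {N : ℕ} (p₀ q₀ : ℝ) (o : Fin N → Outcome) :
    Set (EuclideanSpace ℝ (Fin N)) :=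
  {p | p ∈ frontier (cube N p₀ q₀) ∧
    ∀ i, ¬((p i = p₀ ∧ o i = Outcome.Accept) ∨ (p i = q₀ ∧ o i = Outcome.Reject))}

/-- The real sign `±1` associated to a Boolean. -/
noncomputable def sgn (b : Bool) : ℝ := if b then 1 else -1

/-- The reflection `R(S; σ) = {σ ∗ x : x ∈ S}` of a set `S ⊆ ℝ^N` by a sign vector `σ`,
where `∗` denotes componentwise multiplication. -/
noncomputable def reflectSet {N : ℕ} (σ : Fin N → Bool)
    (S : Set (EuclideanSpace ℝ (Fin N))) : Set (EuclideanSpace ℝ (Fin N)) :=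
  (fun x => (WithLp.toLp 2 (fun i => sgn (σ i) * x i) : EuclideanSpace ℝ (Fin N))) '' S

/-- The union `R(S) = ⋃_σ R(S; σ)` of all `2^N` coordinate reflections of `S`. -/
noncomputable def reflectAll {N : ℕ} (S : Set (EuclideanSpace ℝ (Fin N))) :
    Set (EuclideanSpace ℝ (Fin N)) :=
  ⋃ σ : Fin N → Bool, reflectSet σ S

/-- The translate `v + S` of a set `S ⊆ ℝ^N`. -/
def translateSet {N : ℕ} (v : EuclideanSpace ℝ (Fin N))
    (S : Set (EuclideanSpace ℝ (Fin N))) : Set (EuclideanSpace ℝ (Fin N)) :=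
  (fun x => v + x) '' S

/-!
Inside the cube, a point `p_ô + σ ∗ x` with `x ∈ C_ô` can only lie in `C` if every
coordinate that `σ` flips vanishes, i.e. if `σ ∗ x = x`. Hence `G` and `F` both meet `C`
exactly in `p_ô + D`, and the frontier of a set inside an open set depends only on its trace
there.
-/

open Set

theorem frontier_inter_interior_eq_of_inter_eq {X : Type*} [TopologicalSpace X]
    {s s' t : Set X} (h : s ∩ t = s' ∩ t) :
    frontier s ∩ interior t = frontier s' ∩ interior t := by
  have htrace : s ∩ interior t = s' ∩ interior t := by
    rw [← inter_eq_right.2 interior_subset, ← inter_assoc, h, inter_assoc]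
  rw [← frontier_inter_open_inter isOpen_interior, htrace,
    frontier_inter_open_inter isOpen_interior]

theorem subset_reflectAll {N : ℕ} (S : Set (EuclideanSpace ℝ (Fin N))) : S ⊆ reflectAll S :=
  fun x hx => mem_iUnion.2 ⟨fun _ => true, x, hx, by ext i; simp [sgn]⟩

theorem translateSet_mono {N : ℕ} (v : EuclideanSpace ℝ (Fin N))
    {S T : Set (EuclideanSpace ℝ (Fin N))} (h : S ⊆ T) : translateSet v S ⊆ translateSet v T :=
  image_mono h

section Corner

variable {N : ℕ} {p₀ q₀ : ℝ} {o : Fin N → Outcome}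

theorem sgn_mul_eq_self_of_corner_add_mem_Icc {x : EuclideanSpace ℝ (Fin N)}
    (hx : x ∈ cornerBox p₀ q₀ o) (b : Bool) (i : Fin N)
    (h : corner p₀ q₀ o i + sgn b * x i ∈ Icc p₀ q₀) : sgn b * x i = x i := by
  have hxi := hx i
  cases b with
  | true => simp [sgn]
  | false =>
    suffices x i = 0 by simp [this]
    by_cases ho : o i = Outcome.Accept
    · simp only [corner, ho, if_true, sgn, Bool.false_eq_true, if_false, mem_Icc] at hxi h
      linarith [h.2, hxi.2]
    · simp only [corner, ho, sgn, Bool.false_eq_true, if_false, mem_Icc] at hxi h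
      linarith [h.1, hxi.1]

theorem reflect_eq_self_of_corner_add_mem_cube {x : EuclideanSpace ℝ (Fin N)}
    (hx : x ∈ cornerBox p₀ q₀ o) (σ : Fin N → Bool)
    (h : corner p₀ q₀ o + WithLp.toLp 2 (fun i => sgn (σ i) * x i) ∈ cube N p₀ q₀) :
    (WithLp.toLp 2 (fun i => sgn (σ i) * x i) : EuclideanSpace ℝ (Fin N)) = x := by
  ext i
  exact sgn_mul_eq_self_of_corner_add_mem_Icc hx (σ i) i (h i)

theorem translateSet_reflectAll_inter_cube_subset {D : Set (EuclideanSpace ℝ (Fin N))}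
    (hD : D ⊆ cornerBox p₀ q₀ o) :
    translateSet (corner p₀ q₀ o) (reflectAll D) ∩ cube N p₀ q₀ ⊆
      translateSet (corner p₀ q₀ o) D := by
  rintro y ⟨⟨z, hz, rfl⟩, hyC⟩
  obtain ⟨σ, x, hxD, rfl⟩ := mem_iUnion.1 hz
  exact ⟨x, hxD, congrArg (corner p₀ q₀ o + ·)
    (reflect_eq_self_of_corner_add_mem_cube (hD hxD) σ hyC).symm⟩

end Corner

theorem stmt_19_general {N : ℕ} (p₀ q₀ : ℝ)
    (o : Fin N → Outcome) (D : Set (EuclideanSpace ℝ (Fin N)))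
    (hD : D ⊆ cornerBox p₀ q₀ o)
    (F : Set (EuclideanSpace ℝ (Fin N)))
    (hF : F ∩ cube N p₀ q₀ = translateSet (corner p₀ q₀ o) D) :
    frontier F ∩ interior (cube N p₀ q₀) =
      frontier (translateSet (corner p₀ q₀ o) (reflectAll D)) ∩ interior (cube N p₀ q₀) := by
  apply frontier_inter_interior_eq_of_inter_eq
  refine subset_antisymm (subset_inter ?_ inter_subset_right) ?_
  · exact hF ▸ translateSet_mono _ (subset_reflectAll D)
  · exact hF ▸ translateSet_reflectAll_inter_cube_subset hD

/-- **Boundaries agree in the interior of the cube.**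
For an outcome `ô`, a subset `D ⊆ C_ô`, a set `F` with `F ∩ C = p_ô + D`, and
`G = p_ô + R(D)`, we have `∂F ∩ int(C) = ∂G ∩ int(C)`. -/
theorem stmt_19 {N : ℕ} (hN : 1 ≤ N) (p₀ q₀ : ℝ) (hpq : p₀ < q₀)
    (o : Fin N → Outcome) (D : Set (EuclideanSpace ℝ (Fin N)))
    (hD : D ⊆ cornerBox p₀ q₀ o)
    (F : Set (EuclideanSpace ℝ (Fin N)))
    (hF : F ∩ cube N p₀ q₀ = translateSet (corner p₀ q₀ o) D) :
    frontier F ∩ interior (cube N p₀ q₀) =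
      frontier (translateSet (corner p₀ q₀ o) (reflectAll D)) ∩ interior (cube N p₀ q₀) :=
  stmt_19_general p₀ q₀ o D hD F hF
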